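/- Every Δ-block tree T on the unit sphere of E contains a subtree T' (nonempty, and still a Δ-block tree) all of whose infinite branches are Δ-block sequences. -/

import Mathlib

open Filter Topology

noncomputable section

structure SchauderBasisR (X : Type*) [NormedAddCommGroup X] [NormedSpace ℝ X] where
  e : ℕ → X
  coord : ℕ → X →L[ℝ] ℝ
  biorth : ∀ n m, coord n (e m) = if n = m then 1 else 0
  expansion : ∀ x : X,
    Filter.Tendsto (fun N => ∑ n ∈ Finset.range N, coord n x • e n) Filter.atTop (nhds x)
  normalised : ∀ n, ‖e n‖ = 1

section Defs

variable {X Y : Type*} [NormedAddCommGroup X] [NormedSpace ℝ X]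
  [NormedAddCommGroup Y] [NormedSpace ℝ Y]

/-- Convergence of the series `∑ x n` (of partial sums). -/
def Converges (x : ℕ → X) : Prop :=
  ∃ s, Filter.Tendsto (fun N => ∑ n ∈ Finset.range N, x n) Filter.atTop (nhds s)

/-- Two sequences are equivalent if the same scalar series converge. -/
def SeqEquiv (x : ℕ → X) (y : ℕ → Y) : Prop :=
  ∀ a : ℕ → ℝ, Converges (fun n => a n • x n) ↔ Converges (fun n => a n • y n)

/-- `C`-equivalence of two sequences. -/
def CEquiv (C : ℝ) (x : ℕ → X) (y : ℕ → Y) : Prop :=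
  ∀ (a : ℕ → ℝ) (N : ℕ),
    C⁻¹ * ‖∑ n ∈ Finset.range N, a n • y n‖ ≤ ‖∑ n ∈ Finset.range N, a n • x n‖ ∧
    ‖∑ n ∈ Finset.range N, a n • x n‖ ≤ C * ‖∑ n ∈ Finset.range N, a n • y n‖

/-- A basic sequence: uniformly bounded partial-sum projections. -/
def IsBasicSeq (x : ℕ → X) : Prop :=
  ∃ K, 1 ≤ K ∧ ∀ (a : ℕ → ℝ) (m n : ℕ), m ≤ n →
    ‖∑ i ∈ Finset.range m, a i • x i‖ ≤ K * ‖∑ i ∈ Finset.range n, a i • x i‖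

/-- A sequence of signs. -/
def IsSigns (θ : ℕ → ℝ) : Prop := ∀ n, θ n = 1 ∨ θ n = -1

end Defs

namespace SchauderBasisR

variable {X : Type*} [NormedAddCommGroup X] [NormedSpace ℝ X] (b : SchauderBasisR X)

/-- Support of a vector with respect to the basis. -/
def supp (x : X) : Set ℕ := {n | b.coord n x ≠ 0}

/-- A normalised block sequence of the basis. -/
def IsBlockSeq (x : ℕ → X) : Prop :=
  (∀ n, ‖x n‖ = 1) ∧ (∀ n, (b.supp (x n)).Finite) ∧
  ∀ n, ∀ i ∈ b.supp (x n), ∀ j ∈ b.supp (x (n+1)), i < j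

/-- Unconditionality of the basis. -/
def Unconditional : Prop :=
  ∀ θ : ℕ → ℝ, IsSigns θ → SeqEquiv (fun n => θ n • b.e n) b.e

/-- 1-unconditionality (finite-sum form). -/
def OneUnconditional : Prop :=
  ∀ (θ a : ℕ → ℝ), IsSigns θ → ∀ N,
    ‖∑ n ∈ Finset.range N, (θ n * a n) • b.e n‖ ≤ ‖∑ n ∈ Finset.range N, a n • b.e n‖

/-- The shift property: every normalised block sequence is equivalent to its shift. -/
def ShiftProperty : Prop :=
  ∀ x : ℕ → X, b.IsBlockSeq x → SeqEquiv x (fun n => x (n+1))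

/-- The basis is shrinking. -/
def Shrinking : Prop :=
  ∀ f : X →L[ℝ] ℝ, Filter.Tendsto
    (fun n => sSup ((fun y => |f y|) ''
      {y | y ∈ Submodule.span ℝ (Set.range fun i => b.e (n + i)) ∧ ‖y‖ ≤ 1}))
    Filter.atTop (nhds 0)

/-- The basis is boundedly complete. -/
def BoundedlyComplete : Prop :=
  ∀ a : ℕ → ℝ, (∃ M, ∀ N, ‖∑ i ∈ Finset.range N, a i • b.e i‖ ≤ M) →
    Converges (fun i => a i • b.e i)

end SchauderBasisR
/-- A finite-dimensional decomposition of `F`, given by its coordinate projections. -/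
structure FDD (F : Type*) [NormedAddCommGroup F] [NormedSpace ℝ F] where
  Q : ℕ → F →L[ℝ] F
  idem : ∀ i x, Q i (Q i x) = Q i x
  orth : ∀ i j, i ≠ j → ∀ x, Q i (Q j x) = 0
  findim : ∀ i, FiniteDimensional ℝ (LinearMap.range ((Q i).toLinearMap))
  expansion : ∀ x,
    Filter.Tendsto (fun N => ∑ i ∈ Finset.range N, Q i x) Filter.atTop (nhds x)

namespace FDD

variable {F : Type*} [NormedAddCommGroup F] [NormedSpace ℝ F] (d : FDD F)

/-- Projection onto a finite set of coordinates. -/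
def proj (I : Finset ℕ) : F →L[ℝ] F := ∑ i ∈ I, d.Q i

/-- `K` is a constant for the decomposition. -/
def HasConstant (K : ℝ) : Prop :=
  1 ≤ K ∧ ∀ (x : F) (N : ℕ), ‖∑ i ∈ Finset.range N, d.Q i x‖ ≤ K * ‖x‖

/-- A `Δ`-block sequence of the decomposition, lying in `E`. -/
def DeltaBlock (E : Set F) (δ : ℕ → ℝ) (x : ℕ → F) : Prop :=
  (∀ i, x i ∈ E) ∧ (∀ i, ‖x i‖ = 1) ∧
  ∃ l r : ℕ → ℕ, (∀ i, l i ≤ r i) ∧ (∀ i, r i < l (i+1)) ∧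
    ∀ i, ‖d.proj (Finset.Icc (l i) (r i)) (x i) - x i‖ < δ i

/-- An `M`-separated `Δ`-block sequence of the decomposition, lying in `E`. -/
def MSepDeltaBlock (E : Set F) (δ : ℕ → ℝ) (M : ℕ → ℕ) (x : ℕ → F) : Prop :=
  (∀ i, x i ∈ E) ∧ (∀ i, ‖x i‖ = 1) ∧
  ∃ l r : ℕ → ℕ, (∀ i, l i ≤ r i) ∧ (∀ i, r i < l (i+1)) ∧
    (∀ i, ‖d.proj (Finset.Icc (l i) (r i)) (x i) - x i‖ < δ i) ∧
    M 0 < l 0 ∧ ∀ i, ∃ j, r i < M j ∧ M (j+1) < l (i+1)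

end FDD

/-- A decreasing null sequence of positive reals. -/
def NullSeq (δ : ℕ → ℝ) : Prop :=
  (∀ i, 0 < δ i) ∧ (∀ i, δ (i+1) ≤ δ i) ∧ Filter.Tendsto δ Filter.atTop (nhds 0)

/-- A tree on `F`: a nonempty set of finite sequences closed under initial segments. -/
def IsTree {F : Type*} (T : Set (List F)) : Prop :=
  T.Nonempty ∧ ∀ l ∈ T, ∀ l' : List F, l' <+: l → l' ∈ T

/-- A `Δ`-block tree on the unit sphere of `E`. -/
def DeltaBlockTree {F : Type*} [NormedAddCommGroup F] [NormedSpace ℝ F]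
    (d : FDD F) (E : Set F) (δ : ℕ → ℝ) (T : Set (List F)) : Prop :=
  IsTree T ∧ (∀ l ∈ T, ∀ v ∈ l, v ∈ E ∧ ‖v‖ = 1) ∧
  ∀ l ∈ T, ∃ (y : ℕ → F) (p q : ℕ → ℕ),
    Set.range y = {z | l ++ [z] ∈ T} ∧
    (∀ i, p i ≤ q i) ∧
    (∀ i, ‖d.proj (Finset.Icc (p i) (q i)) (y i) - y i‖ < δ l.length) ∧
    Filter.Tendsto p Filter.atTop Filter.atTop

/-- An infinite branch of a tree. -/
def IsBranch {F : Type*} (T : Set (List F)) (x : ℕ → F) : Prop :=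
  ∀ n, (List.ofFn fun i : Fin n => x i) ∈ T

/-!
Fix, for every node `l` of the tree, an enumeration `y l i` of its successors with intervals
`[p l i, q l i]`, `p l i → ∞`. Keep a node only if each of its terms can be matched with an index
whose interval starts beyond the interval matched with the previous term, always taking the least
such index. Because `p l i → ∞`, all but finitely many successors of a kept node remain, so the
kept nodes form a `Δ`-block tree; and along a branch the greedily matched intervals are successive,
which makes the branch a `Δ`-block sequence.
-/

section GreedyMatching

variable {α : Type*} (y : List α → ℕ → α) (p q : List α → ℕ → ℕ)

/-- The right end of the interval matched with the last term of `l` (`0` for `[]`). -/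
def greedyEnd (l : List α) : ℕ :=
  List.reverseRecOn l 0 fun l z e => q l (sInf {i | y l i = z ∧ e < p l i})

def greedyIndex (l : List α) (z : α) : ℕ :=
  sInf {i | y l i = z ∧ greedyEnd y p q l < p l i}

def GreedyAdmissible (l : List α) : Prop :=
  List.reverseRecOn l True fun l z h => h ∧ ∃ i, y l i = z ∧ greedyEnd y p q l < p l i

variable {y p q}

@[simp] lemma greedyEnd_append_singleton (l : List α) (z : α) :
    greedyEnd y p q (l ++ [z]) = q l (greedyIndex y p q l z) := by
  simp [greedyEnd, greedyIndex]

@[simp] lemma greedyAdmissible_nil : GreedyAdmissible y p q [] := by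
  simp [GreedyAdmissible]

@[simp] lemma greedyAdmissible_append_singleton (l : List α) (z : α) :
    GreedyAdmissible y p q (l ++ [z]) ↔
      GreedyAdmissible y p q l ∧ ∃ i, y l i = z ∧ greedyEnd y p q l < p l i := by
  simp [GreedyAdmissible]

lemma GreedyAdmissible.greedyIndex_spec {l : List α} {z : α}
    (h : GreedyAdmissible y p q (l ++ [z])) :
    y l (greedyIndex y p q l z) = z ∧ greedyEnd y p q l < p l (greedyIndex y p q l z) :=
  Nat.sInf_mem ((greedyAdmissible_append_singleton l z).mp h).2

lemma GreedyAdmissible.of_prefix {l l' : List α} (h : GreedyAdmissible y p q l) (hl' : l' <+: l) :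
    GreedyAdmissible y p q l' := by
  induction l using List.reverseRecOn with
  | nil => rwa [List.prefix_nil.mp hl']
  | append_singleton l z ih =>
    rcases List.prefix_concat_iff.mp hl' with rfl | hl'
    · exact h
    · exact ih ((greedyAdmissible_append_singleton l z).mp h).1 hl'

lemma GreedyAdmissible.mem {T : Set (List α)} (hnil : [] ∈ T)
    (hy : ∀ l ∈ T, ∀ i, l ++ [y l i] ∈ T) {l : List α} (h : GreedyAdmissible y p q l) : l ∈ T := by
  induction l using List.reverseRecOn with
  | nil => exact hnil
  | append_singleton l z ih =>
    obtain ⟨hl, i, rfl, -⟩ := (greedyAdmissible_append_singleton l z).mp h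
    exact hy l (ih hl) i

lemma setOf_greedyAdmissible_append_singleton {l : List α} (hl : GreedyAdmissible y p q l) :
    {z | GreedyAdmissible y p q (l ++ [z])} = y l '' {i | greedyEnd y p q l < p l i} := by
  ext z
  simp [hl, and_comm]

lemma ofFn_prefix_succ (x : ℕ → α) (n : ℕ) :
    List.ofFn (fun i : Fin (n + 1) => x i) = List.ofFn (fun i : Fin n => x i) ++ [x n] := by
  rw [List.ofFn_succ_last]
  simp

lemma exists_successive_of_forall_greedyAdmissible {x : ℕ → α}
    (hx : ∀ n, GreedyAdmissible y p q (List.ofFn fun i : Fin n => x i)) :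
    ∃ ι : ℕ → ℕ, (∀ n, y (List.ofFn fun i : Fin n => x i) (ι n) = x n) ∧
      ∀ n, q (List.ofFn fun i : Fin n => x i) (ι n) <
        p (List.ofFn fun i : Fin (n + 1) => x i) (ι (n + 1)) := by
  have hsucc : ∀ n, GreedyAdmissible y p q ((List.ofFn fun i : Fin n => x i) ++ [x n]) :=
    fun n => ofFn_prefix_succ x n ▸ hx (n + 1)
  refine ⟨fun n => greedyIndex y p q (List.ofFn fun i : Fin n => x i) (x n),
    fun n => (hsucc n).greedyIndex_spec.1, fun n => ?_⟩
  calc _ = greedyEnd y p q (List.ofFn fun i : Fin (n + 1) => x i) := by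
        rw [ofFn_prefix_succ, greedyEnd_append_singleton]
    _ < _ := (hsucc (n + 1)).greedyIndex_spec.2

end GreedyMatching

lemma exists_tendsto_range_eq_setOf_lt {p : ℕ → ℕ} (hp : Tendsto p atTop atTop) (b : ℕ) :
    ∃ σ : ℕ → ℕ, Set.range σ = {i | b < p i} ∧ Tendsto σ atTop atTop := by
  have hinf : {i | b < p i}.Infinite :=
    Nat.frequently_atTop_iff_infinite.mp (hp.eventually_gt_atTop b).frequently
  exact ⟨Nat.nth (b < p ·), Nat.range_nth_of_infinite hinf,
    (Nat.nth_strictMono hinf).tendsto_atTop⟩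

theorem delta_block_tree_pruning
    {F : Type*} [NormedAddCommGroup F] [NormedSpace ℝ F]
    (d : FDD F) (E : Set F) (δ : ℕ → ℝ)
    (T : Set (List F)) (hT : DeltaBlockTree d E δ T) :
    ∃ T' : Set (List F), T' ⊆ T ∧ DeltaBlockTree d E δ T' ∧
      ∀ x : ℕ → F, IsBranch T' x → d.DeltaBlock E δ x := by
  obtain ⟨⟨⟨l₀, hl₀⟩, hpre⟩, hsphere, hsucc⟩ := hT
  choose! y p q hrange hle hnorm htend using hsucc
  have hsub : {l | GreedyAdmissible y p q l} ⊆ T := fun l hl =>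
    hl.mem (hpre l₀ hl₀ [] List.nil_prefix) fun l hl i => (hrange l hl).le ⟨i, rfl⟩
  refine ⟨_, hsub, ⟨⟨⟨[], greedyAdmissible_nil⟩, fun l hl l' hl' => hl.of_prefix hl'⟩,
    fun l hl => hsphere l (hsub hl), fun l hl => ?_⟩, fun x hx => ?_⟩
  · obtain ⟨σ, hσ, hσ_tendsto⟩ :=
      exists_tendsto_range_eq_setOf_lt (htend l (hsub hl)) (greedyEnd y p q l)
    refine ⟨y l ∘ σ, p l ∘ σ, q l ∘ σ, ?_, fun i => hle l (hsub hl) _,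
      fun i => hnorm l (hsub hl) _, (htend l (hsub hl)).comp hσ_tendsto⟩
    rw [Set.range_comp, hσ, ← setOf_greedyAdmissible_append_singleton hl]
    rfl
  · obtain ⟨ι, hyι, hsep⟩ := exists_successive_of_forall_greedyAdmissible hx
    have hsphere' : ∀ n, x n ∈ E ∧ ‖x n‖ = 1 := fun n =>
      hsphere _ (hsub (hx (n + 1))) (x n) (by rw [ofFn_prefix_succ]; simp)
    refine ⟨fun n => (hsphere' n).1, fun n => (hsphere' n).2, _, _,
      fun n => hle _ (hsub (hx n)) (ι n), hsep, fun n => ?_⟩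
    simpa [hyι n] using hnorm _ (hsub (hx n)) (ι n)
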